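/- arXiv:2209.04690 — 3 statements merged into one kernel-verified Lean document; each statement's English description precedes it below -/
import Mathlib

section
/- Let n, m be positive integers with m ≤ n, let f : ℝⁿ → ℝ and g : ℝⁿ → ℝᵐ be C² functions, and let x* ∈ ℝⁿ satisfy g(x*) = 0 with Jg(x*) of full rank m. Suppose there exists λ* ∈ ℝᵐ with ∇f(x*) = Jg(x*)ᵀ λ* (first-order conditions) and suppose that vᵀ(∇²f(x*) − Σᵢ₌₁ᵐ λᵢ* ∇²gᵢ(x*)) v > 0 for every nonzero v ∈ Ker(Jg(x*)). Then x* is a local minimum of f subject to the constraint g = 0, i.e. there is a neighborhood U of x* such that f(x) ≥ f(x*) for every x ∈ U with g(x) = 0. -/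
/-!
For large `ρ` the augmented Lagrangian `L_ρ = f - λᵀg + (ρ/2)‖g‖²` has a critical point at `x*`
(this is the first-order condition) whose second derivative `∇²f - Σ λᵢ ∇²gᵢ + ρ JᵀJ` is positive
definite: on the unit sphere the form is positive wherever `Jv = 0`, and compactness of the sphere
yields a single `ρ` that works everywhere on it. By the second-derivative test `x*` is then an
unconstrained local minimum of `L_ρ`, and `L_ρ = f` on `{g = 0}`.
-/

open Matrix Set Metric

noncomputable def grad {n : ℕ} (f : (Fin n → ℝ) → ℝ) (x : Fin n → ℝ) : Fin n → ℝ :=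
  fun i => fderiv ℝ f x (Pi.single i 1)

noncomputable def hess {n : ℕ} (f : (Fin n → ℝ) → ℝ) (x : Fin n → ℝ) :
    Matrix (Fin n) (Fin n) ℝ :=
  Matrix.of fun i j => fderiv ℝ (fun y => fderiv ℝ f y (Pi.single j 1)) x (Pi.single i 1)

noncomputable def jac {n m : ℕ} (g : (Fin n → ℝ) → Fin m → ℝ) (x : Fin n → ℝ) :
    Matrix (Fin m) (Fin n) ℝ :=
  Matrix.of fun i j => fderiv ℝ (fun y => g y i) x (Pi.single j 1)

noncomputable def euclNorm {n : ℕ} (v : Fin n → ℝ) : ℝ := Real.sqrt (v ⬝ᵥ v)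

open Filter Topology

/-- Finsler's lemma in compact form: the open sets `{q + N p > 0}` increase with `N` and cover
`K`, so one of them already contains `K`. -/
lemma IsCompact.exists_forall_add_mul_pos {X : Type*} [TopologicalSpace X] {K : Set X}
    (hK : IsCompact K) {q p : X → ℝ} (hq : Continuous q) (hp : Continuous p)
    (hp₀ : ∀ x, 0 ≤ p x) (hqp : ∀ x ∈ K, p x = 0 → 0 < q x) :
    ∃ ρ : ℝ, ∀ x ∈ K, 0 < q x + ρ * p x := by
  have hcover : K ⊆ ⋃ N : ℕ, {x | 0 < q x + N * p x} := by
    intro x hx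
    rcases (hp₀ x).eq_or_lt with hpx | hpx
    · exact mem_iUnion.2 ⟨0, by simpa using hqp x hx hpx.symm⟩
    · obtain ⟨N, hN⟩ := exists_nat_gt (-q x / p x)
      refine mem_iUnion.2 ⟨N, ?_⟩
      have := (div_lt_iff₀ hpx).1 hN
      simp only [mem_ofPred_eq]
      linarith
  have hmono : Monotone fun N : ℕ => {x | 0 < q x + N * p x} := fun N N' hNN' x hx => by
    have : (N : ℝ) * p x ≤ N' * p x := by gcongr; exact hp₀ x
    simp only [mem_ofPred_eq] at hx ⊢
    linarith
  obtain ⟨N, hN⟩ := hK.elim_directed_cover _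
    (fun N => isOpen_lt continuous_const (hq.add (continuous_const.mul hp))) hcover
    hmono.directed_le
  exact ⟨N, hN⟩

section SecondDerivativeTest

variable {E : Type*} [NormedAddCommGroup E] [NormedSpace ℝ E]

lemma le_of_hasDerivAt_of_deriv2_nonneg {φ φ' φ'' : ℝ → ℝ} {a b : ℝ} (hab : a ≤ b)
    (hφ : ∀ s ∈ Icc a b, HasDerivAt φ (φ' s) s) (hφ' : ∀ s ∈ Icc a b, HasDerivAt φ' (φ'' s) s)
    (ha : φ' a = 0) (hφ'' : ∀ s ∈ Icc a b, 0 ≤ φ'' s) : φ a ≤ φ b := by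
  have hint : interior (Icc a b) ⊆ Icc a b := interior_subset
  have hmono' : MonotoneOn φ' (Icc a b) :=
    monotoneOn_of_hasDerivWithinAt_nonneg (convex_Icc a b)
      (fun s hs => (hφ' s hs).continuousAt.continuousWithinAt)
      (fun s hs => (hφ' s (hint hs)).hasDerivWithinAt) (fun s hs => hφ'' s (hint hs))
  have hmono : MonotoneOn φ (Icc a b) :=
    monotoneOn_of_hasDerivWithinAt_nonneg (convex_Icc a b)
      (fun s hs => (hφ s hs).continuousAt.continuousWithinAt)
      (fun s hs => (hφ s (hint hs)).hasDerivWithinAt)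
      (fun s hs => ha ▸ hmono' (left_mem_Icc.2 hab) (hint hs) (hint hs).1)
  exact hmono (left_mem_Icc.2 hab) (right_mem_Icc.2 hab) hab

lemma ContDiff.differentiable_fderiv {F : E → ℝ} {k : WithTop ℕ∞} (hF : ContDiff ℝ k F)
    (hk : 2 ≤ k) : Differentiable ℝ (fderiv ℝ F) :=
  (hF.fderiv_right (m := 1) hk).differentiable one_ne_zero

lemma hasDerivAt_comp_add_smul {F : E → ℝ} {x d : E} {s : ℝ}
    (hF : DifferentiableAt ℝ F (x + s • d)) :
    HasDerivAt (fun t : ℝ => F (x + t • d)) (fderiv ℝ F (x + s • d) d) s := by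
  have hline : HasDerivAt (fun t : ℝ => x + t • d) d s := by
    simpa using ((hasDerivAt_id s).smul_const d).const_add x
  exact hF.hasFDerivAt.comp_hasDerivAt s hline

lemma fderiv_apply_eq_fderiv_fderiv {F : E → ℝ} {y : E} (hF : DifferentiableAt ℝ (fderiv ℝ F) y)
    (v w : E) : fderiv ℝ (fun z => fderiv ℝ F z w) y v = fderiv ℝ (fderiv ℝ F) y v w := by
  rw [fderiv_clm_apply hF (differentiableAt_const w)]
  simp

lemma ContinuousLinearMap.apply_self_nonneg_of_forall_mem_sphere (B : E →L[ℝ] E →L[ℝ] ℝ)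
    (hB : ∀ u ∈ sphere (0 : E) 1, 0 < B u u) (v : E) : 0 ≤ B v v := by
  rcases eq_or_ne v 0 with rfl | hv
  · simp
  have hnv : 0 < ‖v‖ := norm_pos_iff.2 hv
  have hu : ‖v‖⁻¹ • v ∈ sphere (0 : E) 1 := by
    simp [norm_smul, hnv.ne']
  have hscale : B v v = ‖v‖ ^ 2 * B (‖v‖⁻¹ • v) (‖v‖⁻¹ • v) := by
    simp only [map_smul, _root_.smul_apply, smul_eq_mul]
    field_simp
  rw [hscale]
  exact mul_nonneg (sq_nonneg _) (hB _ hu).le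

lemma eventually_forall_apply_self_nonneg [ProperSpace E] {H : E → E →L[ℝ] E →L[ℝ] ℝ}
    (hH : Continuous H) {x₀ : E} (hpos : ∀ u ∈ sphere (0 : E) 1, 0 < H x₀ u u) :
    ∀ᶠ y in 𝓝 x₀, ∀ v, 0 ≤ H y v v := by
  have hcont : Continuous fun p : E × E => H p.1 p.2 p.2 := by fun_prop
  have htube : ∀ᶠ y in 𝓝 x₀, ∀ u ∈ sphere (0 : E) 1, 0 < H y u u :=
    (isCompact_sphere 0 1).eventually_forall_of_forall_eventually fun u hu =>
      continuousAt_const.eventually_lt hcont.continuousAt (hpos u hu)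
  filter_upwards [htube] with y hy
  exact (H y).apply_self_nonneg_of_forall_mem_sphere hy

theorem isLocalMin_of_fderiv_eq_zero [ProperSpace E] {F : E → ℝ} (hF : ContDiff ℝ 2 F)
    {x₀ : E} (h₀ : fderiv ℝ F x₀ = 0)
    (hpos : ∀ u ∈ sphere (0 : E) 1, 0 < fderiv ℝ (fderiv ℝ F) x₀ u u) : IsLocalMin F x₀ := by
  obtain ⟨r, hr, hpsd⟩ := Metric.eventually_nhds_iff_ball.1 <| eventually_forall_apply_self_nonneg
    ((hF.fderiv_right (m := 1) (by norm_num)).continuous_fderiv one_ne_zero) hpos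
  filter_upwards [ball_mem_nhds x₀ hr] with y hy
  have hseg : ∀ s ∈ Icc (0 : ℝ) 1, x₀ + s • (y - x₀) ∈ ball x₀ r := fun s hs =>
    (convex_ball x₀ r).add_smul_sub_mem (mem_ball_self hr) hy hs
  have hF' := hF.differentiable_fderiv le_rfl
  have key := le_of_hasDerivAt_of_deriv2_nonneg zero_le_one
    (fun s _ => hasDerivAt_comp_add_smul ((hF.differentiable two_ne_zero) _))
    (fun s _ => fderiv_apply_eq_fderiv_fderiv (hF' _) _ _ ▸
      hasDerivAt_comp_add_smul (F := fun z => fderiv ℝ F z (y - x₀))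
        (hF'.clm_apply (differentiable_const _) _))
    (by simp [h₀]) (fun s hs => hpsd _ (hseg s hs) _)
  simpa using key

end SecondDerivativeTest

noncomputable def augLagrangian {E ι : Type*} [Fintype ι] (f : E → ℝ) (g : E → ι → ℝ)
    (lam : ι → ℝ) (ρ : ℝ) (x : E) : ℝ :=
  f x - ∑ i, lam i * g x i + ρ / 2 * ∑ i, g x i ^ 2

namespace augLagrangian

variable {E ι : Type*} [Fintype ι] {f : E → ℝ} {g : E → ι → ℝ} {lam : ι → ℝ} {ρ : ℝ}

lemma eq_of_eq_zero {x : E} (hx : g x = 0) : augLagrangian f g lam ρ x = f x := by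
  simp [augLagrangian, hx]

variable [NormedAddCommGroup E] [NormedSpace ℝ E]

lemma contDiff {k : WithTop ℕ∞} (hf : ContDiff ℝ k f) (hg : ContDiff ℝ k g) :
    ContDiff ℝ k (augLagrangian f g lam ρ) := by
  have hgi := contDiff_pi.1 hg
  unfold augLagrangian
  fun_prop

lemma hasFDerivAt (hf : Differentiable ℝ f) (hg : Differentiable ℝ g) (x : E) :
    HasFDerivAt (augLagrangian f g lam ρ)
      (fderiv ℝ f x - ∑ i, lam i • fderiv ℝ (fun y => g y i) x
        + ρ • ∑ i, g x i • fderiv ℝ (fun y => g y i) x) x := by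
  have hgi : ∀ i, HasFDerivAt (fun y => g y i) (fderiv ℝ (fun y => g y i) x) x := fun i =>
    (differentiable_pi.1 hg i x).hasFDerivAt
  have hsq : HasFDerivAt (fun y => ∑ i, g y i ^ 2)
      (∑ i, (2 * g x i) • fderiv ℝ (fun y => g y i) x) x :=
    HasFDerivAt.fun_sum fun i _ => by simpa using (hgi i).pow 2
  have hL := ((hf x).hasFDerivAt.fun_sub (HasFDerivAt.fun_sum (u := Finset.univ) fun i _ =>
    (hgi i).const_mul (lam i))).fun_add (hsq.const_mul (ρ / 2))
  refine hL.congr_fderiv ?_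
  simp only [Finset.smul_sum, smul_smul]
  congr 2 with i
  ring_nf

lemma fderiv_eq_zero (hf : Differentiable ℝ f) (hg : Differentiable ℝ g) {x : E} (hx : g x = 0)
    (hfo : fderiv ℝ f x = ∑ i, lam i • fderiv ℝ (fun y => g y i) x) :
    fderiv ℝ (augLagrangian f g lam ρ) x = 0 := by
  rw [(hasFDerivAt hf hg x).fderiv, hfo]
  simp [hx]

lemma fderiv_fderiv_apply (hf : ContDiff ℝ 2 f) (hg : ContDiff ℝ 2 g) {x : E} (hx : g x = 0)
    (v w : E) :
    fderiv ℝ (fderiv ℝ (augLagrangian f g lam ρ)) x v w =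
      fderiv ℝ (fderiv ℝ f) x v w - ∑ i, lam i * fderiv ℝ (fderiv ℝ (fun y => g y i)) x v w
        + ρ * ∑ i, fderiv ℝ (fun y => g y i) x v * fderiv ℝ (fun y => g y i) x w := by
  have hgi := contDiff_pi.1 hg
  have hD : fderiv ℝ (augLagrangian f g lam ρ) = fun y => fderiv ℝ f y
      - ∑ i, lam i • fderiv ℝ (fun y => g y i) y + ρ • ∑ i, g y i • fderiv ℝ (fun y => g y i) y :=
    funext fun y =>
      (hasFDerivAt (hf.differentiable two_ne_zero) (hg.differentiable two_ne_zero) y).fderiv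
  have hD2 : ∀ {F : E → ℝ}, ContDiff ℝ 2 F →
      HasFDerivAt (fderiv ℝ F) (fderiv ℝ (fderiv ℝ F) x) x := fun hF =>
    (hF.differentiable_fderiv le_rfl x).hasFDerivAt
  have hL : HasFDerivAt (fun y => fderiv ℝ f y - ∑ i, lam i • fderiv ℝ (fun y => g y i) y
      + ρ • ∑ i, g y i • fderiv ℝ (fun y => g y i) y) _ x :=
    ((hD2 hf).fun_sub (HasFDerivAt.fun_sum (u := Finset.univ) fun i _ =>
      (hD2 (hgi i)).const_smul (lam i))).fun_add
      ((HasFDerivAt.fun_sum (u := Finset.univ) fun i _ =>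
        ((hgi i).differentiable two_ne_zero x).hasFDerivAt.smul (hD2 (hgi i))).const_smul ρ)
  rw [hD, hL.fderiv]
  simp [hx]

end augLagrangian

lemma sum_apply_single_mul {ι : Type*} [Fintype ι] [DecidableEq ι] (T : (ι → ℝ) →L[ℝ] ℝ)
    (v : ι → ℝ) : ∑ j, T (Pi.single j 1) * v j = T v := by
  conv_rhs => rw [← Finset.univ_sum_single v]
  rw [map_sum]
  refine Finset.sum_congr rfl fun j _ => ?_
  rw [show Pi.single j (v j) = v j • Pi.single j (1 : ℝ) by
    rw [← Pi.single_smul', smul_eq_mul, mul_one], map_smul, smul_eq_mul, mul_comm]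

lemma jac_mulVec {n m : ℕ} (g : (Fin n → ℝ) → Fin m → ℝ) (x v : Fin n → ℝ) :
    jac g x *ᵥ v = fun i => fderiv ℝ (fun y => g y i) x v := by
  ext i
  exact sum_apply_single_mul _ v

lemma grad_dotProduct {n : ℕ} (f : (Fin n → ℝ) → ℝ) (x v : Fin n → ℝ) :
    grad f x ⬝ᵥ v = fderiv ℝ f x v :=
  sum_apply_single_mul _ v

lemma dotProduct_hess_mulVec {n : ℕ} {F : (Fin n → ℝ) → ℝ} {x : Fin n → ℝ}
    (hF : DifferentiableAt ℝ (fderiv ℝ F) x) (v w : Fin n → ℝ) :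
    v ⬝ᵥ (hess F x *ᵥ w) = fderiv ℝ (fderiv ℝ F) x v w := by
  have : hess F x = LinearMap.toMatrix₂' ℝ
      (ContinuousLinearMap.toLinearMap₁₂ (fderiv ℝ (fderiv ℝ F) x)) := by
    ext i j
    simp [hess, fderiv_clm_apply hF (differentiableAt_const _)]
  rw [this, ← Matrix.toLinearMap₂'_apply', Matrix.toLinearMap₂'_toMatrix']
  rfl

lemma fderiv_eq_sum_smul_of_grad_eq {n m : ℕ} {f : (Fin n → ℝ) → ℝ}
    {g : (Fin n → ℝ) → Fin m → ℝ} {x : Fin n → ℝ} {lam : Fin m → ℝ}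
    (h : grad f x = (jac g x)ᵀ *ᵥ lam) :
    fderiv ℝ f x = ∑ i, lam i • fderiv ℝ (fun y => g y i) x := by
  ext v
  calc fderiv ℝ f x v = grad f x ⬝ᵥ v := (grad_dotProduct f x v).symm
    _ = lam ⬝ᵥ (jac g x *ᵥ v) := by rw [h, mulVec_transpose, dotProduct_mulVec]
    _ = _ := by simp [jac_mulVec, dotProduct]

lemma dotProduct_sub_sum_hess_mulVec {n m : ℕ} {f : (Fin n → ℝ) → ℝ}
    {g : (Fin n → ℝ) → Fin m → ℝ} (hf : ContDiff ℝ 2 f) (hg : ContDiff ℝ 2 g)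
    (lam : Fin m → ℝ) (x v : Fin n → ℝ) :
    v ⬝ᵥ ((hess f x - ∑ i, lam i • hess (fun y => g y i) x) *ᵥ v) =
      fderiv ℝ (fderiv ℝ f) x v v - ∑ i, lam i * fderiv ℝ (fderiv ℝ (fun y => g y i)) x v v := by
  simp [sub_mulVec, sum_mulVec, smul_mulVec, dotProduct_sum,
    dotProduct_hess_mulVec (hf.differentiable_fderiv le_rfl x),
    dotProduct_hess_mulVec ((contDiff_pi.1 hg _).differentiable_fderiv le_rfl x)]

theorem stmt_1_general {n m : ℕ}
    (f : (Fin n → ℝ) → ℝ) (g : (Fin n → ℝ) → Fin m → ℝ)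
    (hf : ContDiff ℝ 2 f) (hg : ContDiff ℝ 2 g)
    (xs : Fin n → ℝ) (hgxs : g xs = 0)
    (lam : Fin m → ℝ) (hfo : grad f xs = (jac g xs)ᵀ *ᵥ lam)
    (hso : ∀ v : Fin n → ℝ, jac g xs *ᵥ v = 0 → v ≠ 0 →
      0 < v ⬝ᵥ ((hess f xs - ∑ i, lam i • hess (fun y => g y i) xs) *ᵥ v)) :
    ∃ U ∈ nhds xs, ∀ y ∈ U, g y = 0 → f xs ≤ f y := by
  obtain ⟨ρ, hρ⟩ := (isCompact_sphere (0 : Fin n → ℝ) 1).exists_forall_add_mul_pos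
    (q := fun v => fderiv ℝ (fderiv ℝ f) xs v v
      - ∑ i, lam i * fderiv ℝ (fderiv ℝ (fun y => g y i)) xs v v)
    (p := fun v => ∑ i, fderiv ℝ (fun y => g y i) xs v ^ 2) (by fun_prop) (by fun_prop)
    (fun v => by positivity) fun u hu hp => by
      have hker : jac g xs *ᵥ u = 0 := by
        rw [jac_mulVec]
        ext i
        exact pow_eq_zero_iff two_ne_zero |>.1 <|
          (Finset.sum_eq_zero_iff_of_nonneg fun i _ => sq_nonneg _).1 hp i (Finset.mem_univ i)
      simpa [dotProduct_sub_sum_hess_mulVec hf hg] using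
        hso u hker (ne_of_mem_sphere hu one_ne_zero)
  have hmin : IsLocalMin (augLagrangian f g lam ρ) xs :=
    isLocalMin_of_fderiv_eq_zero (augLagrangian.contDiff hf hg)
      (augLagrangian.fderiv_eq_zero (hf.differentiable two_ne_zero)
        (hg.differentiable two_ne_zero) hgxs (fderiv_eq_sum_smul_of_grad_eq hfo))
      fun u hu => by simpa [augLagrangian.fderiv_fderiv_apply hf hg hgxs, sq] using hρ u hu
  refine ⟨_, hmin, fun y hy hgy => ?_⟩
  simpa [augLagrangian.eq_of_eq_zero hgxs, augLagrangian.eq_of_eq_zero hgy] using hy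

/-- second-order sufficient optimality conditions for an
equality-constrained local minimum. -/
theorem stmt_1 {n m : ℕ} (hm : 0 < m) (hmn : m ≤ n)
    (f : (Fin n → ℝ) → ℝ) (g : (Fin n → ℝ) → Fin m → ℝ)
    (hf : ContDiff ℝ 2 f) (hg : ContDiff ℝ 2 g)
    (xs : Fin n → ℝ) (hgxs : g xs = 0)
    (hrank : (jac g xs).rank = m)
    (lam : Fin m → ℝ) (hfo : grad f xs = (jac g xs)ᵀ *ᵥ lam)
    (hso : ∀ v : Fin n → ℝ, jac g xs *ᵥ v = 0 → v ≠ 0 →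
      0 < v ⬝ᵥ ((hess f xs - ∑ i, lam i • hess (fun y => g y i) xs) *ᵥ v)) :
    ∃ U ∈ nhds xs, ∀ y ∈ U, g y = 0 → f xs ≤ f y :=
  stmt_1_general f g hf hg xs hgxs lam hfo hso
end

section
/- Let m ≤ n, let f : ℝⁿ → ℝ and g : ℝⁿ → ℝᵐ be C², let x* satisfy g(x*) = 0 with Jg(x*) of full rank m, and let λ* ∈ ℝᵐ satisfy ∇f(x*) = Jg(x*)ᵀ λ*. Let V be an n×(n−m) matrix whose columns span Ker(Jg(x*)), let r̄ > 0, and let ψ : B(0, r̄) ⊆ ℝ^{n−m} → ℝᵐ be a C² map with ψ(0) = 0, Jψ(0) = 0, and g(x* + Va + Jg(x*)ᵀ ψ(a)) = 0 for all a ∈ B(0, r̄). Define F : B(0, r̄) → ℝ by F(a) = f(x* + Va + Jg(x*)ᵀ ψ(a)). Then the Hessian of F at 0 satisfies ∇²F(0) = Vᵀ (∇²f(x*) − Σᵢ₌₁ᵐ λᵢ* ∇²gᵢ(x*)) V. -/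
/-!
On the ball `g (Φ a) = 0` for `Φ a = x* + V a + Jg(x*)ᵀ ψ(a)`, so near `0` the function `F` agrees
with `L ∘ Φ`, where `L = f - ∑ λᵢ gᵢ` is the Lagrangian. The Lagrange condition says that `x*` is
a critical point of `L`, so the second-order chain rule loses its term `DL(x*) (D²Φ(0) v u)` and
`D²F(0) = D²L(x*) (DΦ(0) ·) (DΦ(0) ·)`; finally `DΦ(0) = V` because `Jψ(0) = 0`.
-/

open Matrix Set Metric

open Filter Topology

section SecondOrderCalculus

variable {𝕜 : Type*} [NontriviallyNormedField 𝕜]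
  {E F G : Type*} [NormedAddCommGroup E] [NormedSpace 𝕜 E] [NormedAddCommGroup F]
  [NormedSpace 𝕜 F] [NormedAddCommGroup G] [NormedSpace 𝕜 G]

theorem ContDiffAt.differentiableAt_fderiv {f : E → F} {x : E} (hf : ContDiffAt 𝕜 2 f x) :
    DifferentiableAt 𝕜 (fderiv 𝕜 f) x :=
  (hf.fderiv_right one_add_one_eq_two.le).differentiableAt one_ne_zero

theorem fderiv_fderiv_comp_apply {h : F → G} {Φ : E → F} {x : E}
    (hh : ContDiffAt 𝕜 2 h (Φ x)) (hΦ : ContDiffAt 𝕜 2 Φ x) (v u : E) :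
    fderiv 𝕜 (fderiv 𝕜 (h ∘ Φ)) x v u =
      fderiv 𝕜 (fderiv 𝕜 h) (Φ x) (fderiv 𝕜 Φ x v) (fderiv 𝕜 Φ x u) +
        fderiv 𝕜 h (Φ x) (fderiv 𝕜 (fderiv 𝕜 Φ) x v u) := by
  have hchain : fderiv 𝕜 (h ∘ Φ) =ᶠ[𝓝 x] fun y => (fderiv 𝕜 h (Φ y)).comp (fderiv 𝕜 Φ y) := by
    filter_upwards [hΦ.eventually (by simp), hΦ.continuousAt.eventually (hh.eventually (by simp))]
      with y hΦy hhy
    exact fderiv_comp y (hhy.differentiableAt two_ne_zero) (hΦy.differentiableAt two_ne_zero)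
  have hDΦ := hΦ.differentiableAt two_ne_zero
  rw [hchain.fderiv_eq,
    fderiv_clm_comp (c := fun y => fderiv 𝕜 h (Φ y)) (hh.differentiableAt_fderiv.comp x hDΦ)
      hΦ.differentiableAt_fderiv,
    fderiv_fun_comp x hh.differentiableAt_fderiv hDΦ]
  simp [add_comm]

theorem fderiv_fderiv_comp_of_fderiv_eq_zero {h : F → G} {Φ : E → F} {x : E}
    (hh : ContDiffAt 𝕜 2 h (Φ x)) (hΦ : ContDiffAt 𝕜 2 Φ x) (hcrit : fderiv 𝕜 h (Φ x) = 0) :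
    fderiv 𝕜 (fderiv 𝕜 (h ∘ Φ)) x =
      (fderiv 𝕜 (fderiv 𝕜 h) (Φ x)).bilinearComp (fderiv 𝕜 Φ x) (fderiv 𝕜 Φ x) := by
  ext v u
  simp [fderiv_fderiv_comp_apply hh hΦ, hcrit]

theorem fderiv_sub_sum_smul {ι : Type*} {s : Finset ι} {u : E → F} {w : ι → E → F} {x : E}
    (hu : DifferentiableAt 𝕜 u x) (hw : ∀ i ∈ s, DifferentiableAt 𝕜 (w i) x) (c : ι → 𝕜) :
    fderiv 𝕜 (fun y => u y - ∑ i ∈ s, c i • w i y) x =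
      fderiv 𝕜 u x - ∑ i ∈ s, c i • fderiv 𝕜 (w i) x :=
  (hu.hasFDerivAt.sub
    (HasFDerivAt.fun_sum fun i hi => (hw i hi).hasFDerivAt.const_smul (c i))).fderiv

end SecondOrderCalculus

theorem LinearMap.toMatrix₂'_toLinearMap₁₂_bilinearComp {n k k' : ℕ}
    (B : (Fin n → ℝ) →L[ℝ] (Fin n → ℝ) →L[ℝ] ℝ)
    (l : (Fin k → ℝ) →L[ℝ] (Fin n → ℝ)) (r : (Fin k' → ℝ) →L[ℝ] (Fin n → ℝ)) :
    LinearMap.toMatrix₂' ℝ (B.bilinearComp l r).toLinearMap₁₂ =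
      (LinearMap.toMatrix' (l : (Fin k → ℝ) →ₗ[ℝ] (Fin n → ℝ)))ᵀ *
        LinearMap.toMatrix₂' ℝ B.toLinearMap₁₂ *
          LinearMap.toMatrix' (r : (Fin k' → ℝ) →ₗ[ℝ] (Fin n → ℝ)) :=
  LinearMap.toMatrix₂'_compl₁₂ B.toLinearMap₁₂ l.toLinearMap r.toLinearMap

theorem hess_eq_toMatrix₂' {n : ℕ} {h : (Fin n → ℝ) → ℝ} {x : Fin n → ℝ}
    (hh : DifferentiableAt ℝ (fderiv ℝ h) x) :
    hess h x = LinearMap.toMatrix₂' ℝ (fderiv ℝ (fderiv ℝ h) x).toLinearMap₁₂ := by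
  ext i j
  simp [hess, fderiv_clm_apply hh (differentiableAt_const _)]

theorem Filter.EventuallyEq.hess_eq {n : ℕ} {f₁ f₂ : (Fin n → ℝ) → ℝ} {x : Fin n → ℝ}
    (h : f₁ =ᶠ[𝓝 x] f₂) : hess f₁ x = hess f₂ x := by
  ext i j
  exact congrArg (fun L : (Fin n → ℝ) →L[ℝ] ℝ => L (Pi.single i 1))
    (h.fderiv.fun_comp fun L : (Fin n → ℝ) →L[ℝ] ℝ => L (Pi.single j 1)).fderiv_eq

theorem hess_sub_sum_smul {n : ℕ} {ι : Type*} {s : Finset ι} {u : (Fin n → ℝ) → ℝ}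
    {w : ι → (Fin n → ℝ) → ℝ} (hu : ContDiff ℝ 2 u) (hw : ∀ i ∈ s, ContDiff ℝ 2 (w i))
    (c : ι → ℝ) (x : Fin n → ℝ) :
    hess (fun y => u y - ∑ i ∈ s, c i • w i y) x = hess u x - ∑ i ∈ s, c i • hess (w i) x := by
  have hL : ContDiff ℝ 2 fun y => u y - ∑ i ∈ s, c i • w i y :=
    hu.sub (ContDiff.sum fun i hi => (hw i hi).const_smul (c i))
  have hDL : fderiv ℝ (fun y => u y - ∑ i ∈ s, c i • w i y) =
      fun y => fderiv ℝ u y - ∑ i ∈ s, c i • fderiv ℝ (w i) y :=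
    funext fun y => fderiv_sub_sum_smul (hu.differentiable two_ne_zero y)
      (fun i hi => (hw i hi).differentiable two_ne_zero y) c
  rw [hess_eq_toMatrix₂' hL.contDiffAt.differentiableAt_fderiv, hDL,
    fderiv_sub_sum_smul hu.contDiffAt.differentiableAt_fderiv
      (fun i hi => (hw i hi).contDiffAt.differentiableAt_fderiv) c,
    hess_eq_toMatrix₂' hu.contDiffAt.differentiableAt_fderiv,
    Finset.sum_congr rfl fun i hi =>
      congrArg (c i • ·) (hess_eq_toMatrix₂' (hw i hi).contDiffAt.differentiableAt_fderiv)]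
  ext i j
  simp [Matrix.sum_apply]

theorem fderiv_eq_sum_smul_of_grad_eq_mulVec {n m : ℕ} {f : (Fin n → ℝ) → ℝ}
    {g : (Fin n → ℝ) → Fin m → ℝ} {x : Fin n → ℝ} {lam : Fin m → ℝ}
    (hfo : grad f x = (jac g x)ᵀ *ᵥ lam) :
    fderiv ℝ f x = ∑ i, lam i • fderiv ℝ (fun y => g y i) x := by
  refine ContinuousLinearMap.coe_injective (LinearMap.pi_ext fun p t => ?_)
  have hp := congrFun hfo p
  simp only [grad, jac, mulVec, dotProduct, transpose_apply, of_apply] at hp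
  have hsingle : (Pi.single p t : Fin n → ℝ) = t • Pi.single p 1 := by
    rw [← Pi.single_smul', smul_eq_mul, mul_one]
  simp [hsingle, hp, Finset.mul_sum, mul_comm]

section Parametrization

variable {k n m : ℕ} (x : Fin n → ℝ) (A : Matrix (Fin n) (Fin k) ℝ) (B : Matrix (Fin n) (Fin m) ℝ)
  {ψ : (Fin k → ℝ) → Fin m → ℝ} {a : Fin k → ℝ}

theorem ContDiffAt.const_add_mulVec_add_mulVec {N : WithTop ℕ∞} (hψ : ContDiffAt ℝ N ψ a) :
    ContDiffAt ℝ N (fun b => x + A *ᵥ b + B *ᵥ ψ b) a :=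
  (contDiffAt_const.add (toLin' A).toContinuousLinearMap.contDiff.contDiffAt).add
    ((toLin' B).toContinuousLinearMap.contDiff.contDiffAt.comp a hψ)

theorem fderiv_const_add_mulVec_add_mulVec (hψ : DifferentiableAt ℝ ψ a) :
    fderiv ℝ (fun b => x + A *ᵥ b + B *ᵥ ψ b) a =
      (toLin' A).toContinuousLinearMap + (toLin' B).toContinuousLinearMap.comp (fderiv ℝ ψ a) := by
  have hΦ := ((hasFDerivAt_const x a).add (toLin' A).toContinuousLinearMap.hasFDerivAt).add
    ((toLin' B).toContinuousLinearMap.hasFDerivAt.comp a hψ.hasFDerivAt)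
  rw [zero_add] at hΦ
  exact hΦ.fderiv

end Parametrization

theorem stmt_11_general {n m : ℕ}
    (f : (Fin n → ℝ) → ℝ) (g : (Fin n → ℝ) → Fin m → ℝ)
    (hf : ContDiff ℝ 2 f) (hg : ContDiff ℝ 2 g)
    (xs : Fin n → ℝ)
    (lam : Fin m → ℝ) (hfo : grad f xs = (jac g xs)ᵀ *ᵥ lam)
    (V : Matrix (Fin n) (Fin (n - m)) ℝ)
    (r : ℝ) (hr : 0 < r)
    (ψ : (Fin (n - m) → ℝ) → Fin m → ℝ)
    (hψ : ContDiffOn ℝ 2 ψ (ball 0 r))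
    (hψ0 : ψ 0 = 0) (hJψ0 : fderiv ℝ ψ 0 = 0)
    (hψg : ∀ a ∈ ball (0 : Fin (n - m) → ℝ) r,
      g (xs + V *ᵥ a + (jac g xs)ᵀ *ᵥ ψ a) = 0)
    (F : (Fin (n - m) → ℝ) → ℝ)
    (hF : F = fun a => f (xs + V *ᵥ a + (jac g xs)ᵀ *ᵥ ψ a)) :
    hess F 0 = Vᵀ * (hess f xs - ∑ i, lam i • hess (fun y => g y i) xs) * V := by
  set Φ : (Fin (n - m) → ℝ) → Fin n → ℝ := fun a => xs + V *ᵥ a + (jac g xs)ᵀ *ᵥ ψ a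
  set L : (Fin n → ℝ) → ℝ := fun y => f y - ∑ i, lam i • g y i
  have hgi : ∀ i ∈ Finset.univ, ContDiff ℝ 2 fun y => g y i := fun i _ =>
    (contDiff_apply ℝ ℝ i).comp hg
  have hL : ContDiff ℝ 2 L := hf.sub (ContDiff.sum fun i hi => (hgi i hi).const_smul (lam i))
  have hψ0' : ContDiffAt ℝ 2 ψ 0 := hψ.contDiffAt (isOpen_ball.mem_nhds (mem_ball_self hr))
  have hΦ : ContDiffAt ℝ 2 Φ 0 := hψ0'.const_add_mulVec_add_mulVec xs V (jac g xs)ᵀ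
  have hΦ0 : Φ 0 = xs := by simp [Φ, hψ0]
  have hDΦ : fderiv ℝ Φ 0 = (toLin' V).toContinuousLinearMap := by
    rw [fderiv_const_add_mulVec_add_mulVec xs V _ (hψ0'.differentiableAt two_ne_zero), hJψ0,
      ContinuousLinearMap.comp_zero, add_zero]
  have hcrit : fderiv ℝ L (Φ 0) = 0 := by
    rw [hΦ0, fderiv_sub_sum_smul (hf.differentiable two_ne_zero xs)
      (fun i hi => (hgi i hi).differentiable two_ne_zero xs),
      fderiv_eq_sum_smul_of_grad_eq_mulVec hfo, sub_self]
  have hFL : F =ᶠ[𝓝 0] L ∘ Φ := by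
    filter_upwards [isOpen_ball.mem_nhds (mem_ball_self hr)] with a ha
    simp [hF, L, Φ, hψg a ha]
  rw [hFL.hess_eq, hess_eq_toMatrix₂' (hL.contDiffAt.comp 0 hΦ).differentiableAt_fderiv,
    fderiv_fderiv_comp_of_fderiv_eq_zero hL.contDiffAt hΦ hcrit,
    LinearMap.toMatrix₂'_toLinearMap₁₂_bilinearComp, hΦ0,
    ← hess_eq_toMatrix₂' hL.contDiffAt.differentiableAt_fderiv, hess_sub_sum_smul hf hgi, hDΦ]
  simp

/-- the Hessian at 0 of the objective in the local parametrization
of the constraint set equals Vᵀ∇²ₓₓL(x*,λ*)V. -/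
theorem stmt_11 {n m : ℕ} (hmn : m ≤ n)
    (f : (Fin n → ℝ) → ℝ) (g : (Fin n → ℝ) → Fin m → ℝ)
    (hf : ContDiff ℝ 2 f) (hg : ContDiff ℝ 2 g)
    (xs : Fin n → ℝ) (hgxs : g xs = 0) (hrank : (jac g xs).rank = m)
    (lam : Fin m → ℝ) (hfo : grad f xs = (jac g xs)ᵀ *ᵥ lam)
    (V : Matrix (Fin n) (Fin (n - m)) ℝ)
    (hV : ∀ v : Fin n → ℝ, jac g xs *ᵥ v = 0 ↔ ∃ a : Fin (n - m) → ℝ, v = V *ᵥ a)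
    (r : ℝ) (hr : 0 < r)
    (ψ : (Fin (n - m) → ℝ) → Fin m → ℝ)
    (hψ : ContDiffOn ℝ 2 ψ (ball 0 r))
    (hψ0 : ψ 0 = 0) (hJψ0 : fderiv ℝ ψ 0 = 0)
    (hψg : ∀ a ∈ ball (0 : Fin (n - m) → ℝ) r,
      g (xs + V *ᵥ a + (jac g xs)ᵀ *ᵥ ψ a) = 0)
    (F : (Fin (n - m) → ℝ) → ℝ)
    (hF : F = fun a => f (xs + V *ᵥ a + (jac g xs)ᵀ *ᵥ ψ a)) :
    hess F 0 = Vᵀ * (hess f xs - ∑ i, lam i • hess (fun y => g y i) xs) * V :=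
  stmt_11_general f g hf hg xs lam hfo V r hr ψ hψ hψ0 hJψ0 hψg F hF
end

section
/- Let m ≤ n, let g : ℝⁿ → ℝᵐ be C², let x* satisfy g(x*) = 0 with Jg(x*) of full rank m, let V be an n×(n−m) matrix whose columns span Ker(Jg(x*)), and let ψ : B(0, r̄) ⊆ ℝ^{n−m} → ℝᵐ be C² with ψ(0) = 0, Jψ(0) = 0, and g(x* + Va + Jg(x*)ᵀ ψ(a)) = 0 for all a ∈ B(0, r̄). Then for each i = 1,…,m, the (n−m)×(n−m) matrix identity Vᵀ ∇²gᵢ(x*) V + Σⱼ₌₁ᵐ (∇gᵢ(x*)ᵀ ∇gⱼ(x*)) ∇²ψⱼ(0) = 0 holds, where ψ = (ψ₁,…,ψₘ) and ∇²ψⱼ(0) is the Hessian of ψⱼ at 0. -/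
open Matrix Set Metric

open Filter Topology ContinuousLinearMap

/-!
Put `φ a = x* + V a + Jᵀ ψ a`, where `J = Jg(x*)`. Differentiating `gᵢ (φ a) = 0` once gives
`Dgᵢ(φ a) ∘ Dφ(a) = 0` near `0`; differentiating this again at `0` gives
`D²gᵢ(x*)(Dφ(0) u, Dφ(0) v) + Dgᵢ(x*)(D²φ(0)(u, v)) = 0`. Since `Dψ(0) = 0` we have `Dφ(0) = V`
and `D²φ(0)(u, v) = Jᵀ D²ψ(0)(u, v)`, and `Dgᵢ(x*) (Jᵀ w) = ∑ⱼ (∇gᵢ ⬝ ∇gⱼ) wⱼ` because the rows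
of `J` are the gradients `∇gⱼ(x*)`. Evaluating at basis vectors `u = e_p`, `v = e_q` gives the
`(p, q)` entry of the identity.
-/

section SecondOrder

variable {𝕜 : Type*} [NontriviallyNormedField 𝕜]
  {E F G : Type*} [NormedAddCommGroup E] [NormedSpace 𝕜 E] [NormedAddCommGroup F]
  [NormedSpace 𝕜 F] [NormedAddCommGroup G] [NormedSpace 𝕜 G]

theorem second_derivative_comp_eq_zero_of_eventually_const {f : F → G} {φ : E → F} {a : E}
    {c : G} {f' : F → F →L[𝕜] G} {f'' : F →L[𝕜] F →L[𝕜] G} {φ' : E → E →L[𝕜] F}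
    {φ'' : E →L[𝕜] E →L[𝕜] F}
    (hf : ∀ᶠ y in 𝓝 (φ a), HasFDerivAt f (f' y) y) (hf' : HasFDerivAt f' f'' (φ a))
    (hφ : ∀ᶠ x in 𝓝 a, HasFDerivAt φ (φ' x) x) (hφ' : HasFDerivAt φ' φ'' a)
    (hfφ : ∀ᶠ x in 𝓝 a, f (φ x) = c) (u v : E) :
    f'' (φ' a u) (φ' a v) + f' (φ a) (φ'' u v) = 0 := by
  have hφa : HasFDerivAt φ (φ' a) a := hφ.self_of_nhds
  have hf_near : ∀ᶠ x in 𝓝 a, HasFDerivAt f (f' (φ x)) (φ x) :=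
    hφa.continuousAt.eventually hf
  have hD_zero : (fun x => (f' (φ x)).comp (φ' x)) =ᶠ[𝓝 a] 0 := by
    filter_upwards [hf_near, hφ, hfφ.eventually_nhds] with x hfx hφx hconst
    exact (hfx.comp x hφx).unique ((hasFDerivAt_const c x).congr_of_eventuallyEq hconst)
  have hD := (hf'.comp a hφa).clm_comp hφ'
  have h := congr($(hD.unique ((hasFDerivAt_const 0 a).congr_of_eventuallyEq hD_zero)) u v)
  simpa [add_comm] using h

theorem ContDiffAt.hasFDerivAt_fderiv {f : E → F} {x : E} (hf : ContDiffAt 𝕜 2 f x) :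
    HasFDerivAt (fderiv 𝕜 f) (fderiv 𝕜 (fderiv 𝕜 f) x) x :=
  ((hf.fderiv_right (m := 1) le_rfl).differentiableAt one_ne_zero).hasFDerivAt

theorem hasFDerivAt_fderiv_apply {ι : Type*} [Fintype ι] {ψ : E → ι → 𝕜} {a : E}
    {Ψ : E →L[𝕜] E →L[𝕜] ι → 𝕜} (hψ : ∀ᶠ x in 𝓝 a, DifferentiableAt 𝕜 ψ x)
    (hΨ : HasFDerivAt (fderiv 𝕜 ψ) Ψ a) (j : ι) :
    HasFDerivAt (fderiv 𝕜 fun x => ψ x j) ((compL 𝕜 E _ 𝕜 (proj j)).comp Ψ) a := by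
  refine ((compL 𝕜 E _ 𝕜 (proj j)).hasFDerivAt.comp a hΨ).congr_of_eventuallyEq ?_
  filter_upwards [hψ] with x hx
  exact ((proj j).hasFDerivAt.comp x hx.hasFDerivAt).fderiv

end SecondOrder

theorem fderiv_apply_eq_grad_dotProduct {n : ℕ} (f : (Fin n → ℝ) → ℝ) (x v : Fin n → ℝ) :
    fderiv ℝ f x v = grad f x ⬝ᵥ v := by
  conv_lhs => rw [← (Pi.basisFun ℝ (Fin n)).sum_repr v]
  simp [grad, dotProduct, mul_comm]

theorem grad_apply_eq_jac {n m : ℕ} (g : (Fin n → ℝ) → Fin m → ℝ) (x : Fin n → ℝ) (i : Fin m) :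
    grad (fun y => g y i) x = jac g x i := rfl

theorem fderiv_apply_transpose_jac_mulVec {n m : ℕ} (g : (Fin n → ℝ) → Fin m → ℝ)
    (x : Fin n → ℝ) (i : Fin m) (w : Fin m → ℝ) :
    fderiv ℝ (fun y => g y i) x ((jac g x)ᵀ *ᵥ w) =
      ∑ j, (grad (fun y => g y i) x ⬝ᵥ grad (fun y => g y j) x) * w j := by
  simp only [fderiv_apply_eq_grad_dotProduct, grad_apply_eq_jac, dotProduct_mulVec,
    vecMul_transpose]
  refine Finset.sum_congr rfl fun j _ => ?_
  rw [dotProduct_comm]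
  rfl

theorem hess_apply_of_hasFDerivAt {n : ℕ} {f : (Fin n → ℝ) → ℝ} {x : Fin n → ℝ}
    {f'' : (Fin n → ℝ) →L[ℝ] (Fin n → ℝ) →L[ℝ] ℝ} (h : HasFDerivAt (fderiv ℝ f) f'' x)
    (i j : Fin n) : hess f x i j = f'' (Pi.single i 1) (Pi.single j 1) := by
  simp [hess, (h.clm_apply (hasFDerivAt_const (Pi.single j 1) x)).fderiv]

theorem transpose_mul_hess_mul_apply {n k : ℕ} {f : (Fin n → ℝ) → ℝ} {x : Fin n → ℝ}
    {f'' : (Fin n → ℝ) →L[ℝ] (Fin n → ℝ) →L[ℝ] ℝ} (h : HasFDerivAt (fderiv ℝ f) f'' x)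
    (V : Matrix (Fin n) (Fin k) ℝ) (p q : Fin k) :
    (Vᵀ * hess f x * V) p q = f'' (V.col p) (V.col q) := by
  have hess_eq : hess f x = LinearMap.toMatrix₂' ℝ (toLinearMap₁₂ f'') := by
    ext i j
    rw [hess_apply_of_hasFDerivAt h, LinearMap.toMatrix₂'_apply]
    rfl
  rw [hess_eq, ← LinearMap.toMatrix'_toLin' V, ← LinearMap.toMatrix₂'_compl₁₂,
    LinearMap.toMatrix₂'_apply]
  simp [Matrix.toLin'_apply]

theorem stmt_15_general {n m : ℕ}
    (g : (Fin n → ℝ) → Fin m → ℝ) (hg : ContDiff ℝ 2 g)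
    (xs : Fin n → ℝ)
    (V : Matrix (Fin n) (Fin (n - m)) ℝ)
    (r : ℝ) (hr : 0 < r)
    (ψ : (Fin (n - m) → ℝ) → Fin m → ℝ)
    (hψ : ContDiffOn ℝ 2 ψ (ball 0 r))
    (hψ0 : ψ 0 = 0) (hJψ0 : fderiv ℝ ψ 0 = 0)
    (hψg : ∀ a ∈ ball (0 : Fin (n - m) → ℝ) r,
      g (xs + V *ᵥ a + (jac g xs)ᵀ *ᵥ ψ a) = 0) :
    ∀ i : Fin m,
      Vᵀ * hess (fun y => g y i) xs * V +
        ∑ j, (grad (fun y => g y i) xs ⬝ᵥ grad (fun y => g y j) xs) •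
          hess (fun a => ψ a j) 0 = 0 := by
  intro i
  set A := (Matrix.toLin' V).toContinuousLinearMap
  set B := (Matrix.toLin' (jac g xs)ᵀ).toContinuousLinearMap
  have hball : ball (0 : Fin (n - m) → ℝ) r ∈ 𝓝 0 := ball_mem_nhds 0 hr
  have hgi : ContDiff ℝ 2 (fun y => g y i) :=
    (proj (R := ℝ) (φ := fun _ : Fin m => ℝ) i).contDiff.comp hg
  have hψ' : ∀ᶠ a in 𝓝 0, HasFDerivAt ψ (fderiv ℝ ψ a) a := by
    filter_upwards [hball] with a ha
    exact ((hψ.contDiffAt (isOpen_ball.mem_nhds ha)).differentiableAt two_ne_zero).hasFDerivAt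
  have hψ'' := (hψ.contDiffAt hball).hasFDerivAt_fderiv
  have hgi'' := hgi.contDiffAt.hasFDerivAt_fderiv (x := xs)
  have key := second_derivative_comp_eq_zero_of_eventually_const (a := 0) (c := (0 : ℝ))
    (f := fun y => g y i) (φ := fun a => xs + A a + B (ψ a))
    (φ' := fun a => A + B.comp (fderiv ℝ ψ a))
    (φ'' := (compL ℝ _ _ _ B).comp (fderiv ℝ (fderiv ℝ ψ) 0))
    (.of_forall fun y => (hgi.differentiable two_ne_zero y).hasFDerivAt)
    (by simpa [hψ0] using hgi'')
    (by filter_upwards [hψ'] with a ha using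
      (A.hasFDerivAt.const_add xs).add (B.hasFDerivAt.comp a ha))
    (((compL ℝ (Fin (n - m) → ℝ) _ _ B).hasFDerivAt.comp 0 hψ'').const_add A)
    (by filter_upwards [hball] with a ha using congr_fun (hψg a ha) i)
  ext p q
  have hpq := key (Pi.single p 1) (Pi.single q 1)
  simp only [hJψ0, comp_zero, add_zero, hψ0, map_zero, A, B, LinearMap.coe_toContinuousLinearMap',
    toLin'_apply, mulVec_single_one, coe_comp, Function.comp_apply, compL_apply,
    fderiv_apply_transpose_jac_mulVec] at hpq
  have hψj j := hess_apply_of_hasFDerivAt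
    (hasFDerivAt_fderiv_apply (hψ'.mono fun _ h => h.differentiableAt) hψ'' j) p q
  simpa [transpose_mul_hess_mul_apply hgi'', Matrix.sum_apply, hψj] using hpq

/-- twice differentiating the constraint along the implicit
parametrization gives Vᵀ∇²gᵢ(x*)V + Σⱼ (∇gᵢ(x*)ᵀ∇gⱼ(x*)) ∇²ψⱼ(0) = 0. -/
theorem stmt_15 {n m : ℕ} (hmn : m ≤ n)
    (g : (Fin n → ℝ) → Fin m → ℝ) (hg : ContDiff ℝ 2 g)
    (xs : Fin n → ℝ) (hgxs : g xs = 0) (hrank : (jac g xs).rank = m)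
    (V : Matrix (Fin n) (Fin (n - m)) ℝ)
    (hV : ∀ v : Fin n → ℝ, jac g xs *ᵥ v = 0 ↔ ∃ a : Fin (n - m) → ℝ, v = V *ᵥ a)
    (r : ℝ) (hr : 0 < r)
    (ψ : (Fin (n - m) → ℝ) → Fin m → ℝ)
    (hψ : ContDiffOn ℝ 2 ψ (ball 0 r))
    (hψ0 : ψ 0 = 0) (hJψ0 : fderiv ℝ ψ 0 = 0)
    (hψg : ∀ a ∈ ball (0 : Fin (n - m) → ℝ) r,
      g (xs + V *ᵥ a + (jac g xs)ᵀ *ᵥ ψ a) = 0) :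
    ∀ i : Fin m,
      Vᵀ * hess (fun y => g y i) xs * V +
        ∑ j, (grad (fun y => g y i) xs ⬝ᵥ grad (fun y => g y j) xs) •
          hess (fun a => ψ a j) 0 = 0 :=
  stmt_15_general g hg xs V r hr ψ hψ hψ0 hJψ0 hψg
end
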